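/- If the Gromov–Prohorov distance d_GP(X_n, X) → 0, then for every ℓ ≥ 1 the distribution of the ℓ×ℓ matrix of pairwise distances (d_n(ξ_i^{(n)}, ξ_j^{(n)}))_{i,j≤ℓ} of ℓ i.i.d. points sampled from μ_n converges weakly to the distribution of (d(ξ_i, ξ_j))_{i,j≤ℓ} for ℓ i.i.d. points sampled from μ. -/

import Mathlib

open MeasureTheory Metric

/-- A complete separable metric measure space, bundled. -/
structure MMS where
  carrier : Type
  met : MetricSpace carrier
  meas : MeasurableSpace carrier
  borel : @BorelSpace carrier met.toUniformSpace.toTopologicalSpace meas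
  μ : @Measure carrier meas
  prob : @IsProbabilityMeasure carrier meas μ
  complete : @CompleteSpace carrier met.toUniformSpace
  separable : @TopologicalSpace.SeparableSpace carrier
    met.toUniformSpace.toTopologicalSpace

attribute [instance] MMS.met MMS.meas MMS.borel MMS.prob MMS.complete
  MMS.separable

/-- The Prohorov distance (parameter 1) between `ρ` and `ρ'` is at most `ε`. -/
def prohorovLE {Z : Type*} [MetricSpace Z] [MeasurableSpace Z]
    (ε : ℝ) (ρ ρ' : Measure Z) : Prop :=
  ∀ B : Set Z, MeasurableSet B →
    ρ' B ≤ ρ (cthickening ε B) + ENNReal.ofReal ε ∧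
    ρ B ≤ ρ' (cthickening ε B) + ENNReal.ofReal ε

/-- The Gromov–Prohorov distance between bundled metric measure spaces. -/
noncomputable def gpDist (A B : MMS) : ℝ :=
  sInf {ε : ℝ | 0 < ε ∧ ∃ (Z : Type) (_ : MetricSpace Z)
    (_ : MeasurableSpace Z) (_ : BorelSpace Z)
    (φ : A.carrier → Z) (φ' : B.carrier → Z),
    Isometry φ ∧ Isometry φ' ∧ prohorovLE ε (A.μ.map φ) (B.μ.map φ')}

/-- The distribution of the `ℓ×ℓ` matrix of pairwise distances of `ℓ` i.i.d.
points sampled from `A.μ`. -/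
noncomputable def tau (A : MMS) (ℓ : ℕ) : Measure (Fin ℓ → Fin ℓ → ℝ) :=
  (Measure.pi fun _ : Fin ℓ => A.μ).map (fun f i j => dist (f i) (f j))

/-
Embed both spaces isometrically into a common space where their laws `ρ`, `ρ'` are `ε`-close in
the Prohorov sense. A one-sided bound `ρ' B ≤ ρ (cthickening r B) + c` survives products, with
radii and errors adding: integrate the sections of `B` against `ρ'`, compare superlevel sets of
the section measures by the layer-cake formula, and thicken the sections by the bound in the
second factor. So the laws of `ℓ` i.i.d. points are `(ℓε, ℓε)`-close, and the `2`-Lipschitz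
distance-matrix map makes their images `(2ℓε, ℓε)`-close. Hence the Lévy–Prokhorov distance of
the matrix distributions is at most `2ℓ · d_GP`, and Lévy–Prokhorov convergence implies weak
convergence.
-/

open Set Filter Topology
open scoped ENNReal NNReal Pointwise

theorem LipschitzWith.mapsTo_cthickening {α β : Type*} [PseudoEMetricSpace α]
    [PseudoEMetricSpace β] {K : ℝ≥0} {f : α → β} (hf : LipschitzWith K f) (r : ℝ) (s : Set α) :
    MapsTo f (cthickening r s) (cthickening (K * r) (f '' s)) := by
  intro x hx
  obtain rfl | hs := s.eq_empty_or_nonempty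
  · simp at hx
  have : Nonempty s := hs.to_subtype
  rw [mem_cthickening_iff] at hx ⊢
  calc infEDist (f x) (f '' s) ≤ ⨅ y : s, K * edist x y :=
        le_iInf fun y => (infEDist_le_edist_of_mem (mem_image_of_mem f y.2)).trans (hf x y)
    _ = K * infEDist x s := by rw [← ENNReal.mul_iInf (by simp), infEDist, iInf_subtype']
    _ ≤ K * ENNReal.ofReal r := by gcongr
    _ = ENNReal.ofReal (K * r) := by
      rw [ENNReal.ofReal_mul K.coe_nonneg, ENNReal.ofReal_coe_nnreal]

theorem lintegral_ofReal_le_add_of_meas_lt_le {α : Type*} [MeasurableSpace α]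
    {ρ ρ' : Measure α} {g h : α → ℝ} {c : ℝ≥0∞} (hg : AEMeasurable g ρ') (hh : AEMeasurable h ρ)
    (hg0 : 0 ≤ g) (hg1 : g ≤ 1) (hh0 : 0 ≤ h)
    (H : ∀ t ∈ Ioo (0 : ℝ) 1, ρ' {x | t < g x} ≤ ρ {x | t ≤ h x} + c) :
    ∫⁻ x, ENNReal.ofReal (g x) ∂ρ' ≤ ∫⁻ x, ENNReal.ofReal (h x) ∂ρ + c := by
  rw [lintegral_eq_lintegral_meas_lt ρ' (.of_forall hg0) hg,
    lintegral_eq_lintegral_meas_le ρ (.of_forall hh0) hh]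
  have H' : ∀ t ∈ Ioi (0 : ℝ),
      ρ' {x | t < g x} ≤ ρ {x | t ≤ h x} + (Iio 1).indicator (fun _ => c) t := by
    intro t ht
    by_cases ht1 : t < 1
    · simpa [ht1] using H t ⟨ht, ht1⟩
    · have : {x | t < g x} = ∅ :=
        eq_empty_of_forall_notMem fun x hx => ht1 ((hx : t < g x).trans_le (hg1 x))
      simp [this]
  calc ∫⁻ t in Ioi 0, ρ' {x | t < g x}
      ≤ ∫⁻ t in Ioi 0, (ρ {x | t ≤ h x} + (Iio 1).indicator (fun _ => c) t) :=
        setLIntegral_mono' measurableSet_Ioi H'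
    _ = (∫⁻ t in Ioi 0, ρ {x | t ≤ h x}) + c := by
      rw [lintegral_add_right _ (measurable_const.indicator measurableSet_Iio),
        lintegral_indicator_const measurableSet_Iio, Measure.restrict_apply measurableSet_Iio,
        Iio_inter_Ioi, Real.volume_Ioo]
      simp

theorem le_measure_preimage_prodMk_cthickening {Z W : Type*} [PseudoEMetricSpace Z]
    [PseudoEMetricSpace W] [MeasurableSpace W] [OpensMeasurableSpace W] {π : Measure W}
    [IsFiniteMeasure π] {B : Set (Z × W)} {r t : ℝ} (hr : 0 ≤ r) {x : Z}
    (hx : x ∈ cthickening r {y | t < (π (Prod.mk y ⁻¹' B)).toReal}) :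
    t ≤ (π (Prod.mk x ⁻¹' cthickening r B)).toReal := by
  set sec : ℝ → Set W := fun s => Prod.mk x ⁻¹' cthickening s B
  have hlarger : ∀ s > r, ENNReal.ofReal t ≤ π (sec s) := by
    intro s hs
    obtain ⟨y, hy, hxy⟩ := infEDist_lt_iff.mp ((mem_cthickening_iff.mp hx).trans_lt
      ((ENNReal.ofReal_lt_ofReal_iff_of_nonneg hr).mpr hs))
    have : Prod.mk y ⁻¹' B ⊆ sec s := fun w hw =>
      mem_cthickening_of_edist_le _ _ _ _ hw (by simpa [Prod.edist_eq] using hxy.le)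
    exact (ENNReal.ofReal_le_of_le_toReal (le_of_lt hy)).trans (measure_mono this)
  have hlim : Tendsto (fun s => π (sec s)) (𝓝[>] r) (𝓝 (π (sec r))) := by
    have := tendsto_measure_biInter_gt (μ := π) (s := sec) (a := r)
      (fun s _ => (isClosed_cthickening.preimage
        (Continuous.prodMk_right x)).measurableSet.nullMeasurableSet)
      (fun i j _ hij => preimage_mono (cthickening_mono hij B))
      ⟨r + 1, by linarith, measure_ne_top _ _⟩
    rwa [← preimage_iInter₂, ← cthickening_eq_iInter_cthickening] at this
  exact (ENNReal.ofReal_le_iff_le_toReal (measure_ne_top _ _)).mp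
    (ge_of_tendsto hlim (eventually_nhdsWithin_of_forall hlarger))

section ProhorovDominated

variable {Z : Type*} [PseudoEMetricSpace Z] [MeasurableSpace Z]

def ProhorovDominated (r : ℝ) (c : ℝ≥0∞) (ρ ρ' : Measure Z) : Prop :=
  ∀ B, MeasurableSet B → ρ' B ≤ ρ (cthickening r B) + c

variable {r : ℝ} {c : ℝ≥0∞}

theorem ProhorovDominated.map {M : Type*} [PseudoEMetricSpace M] [MeasurableSpace M]
    [OpensMeasurableSpace M] {ν ν' : Measure Z} (h : ProhorovDominated r c ν ν')
    {K : ℝ≥0} {D : Z → M} (hD : LipschitzWith K D) (hDm : Measurable D) :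
    ProhorovDominated (K * r) c (ν.map D) (ν'.map D) := by
  intro B hB
  rw [Measure.map_apply hDm hB, Measure.map_apply hDm isClosed_cthickening.measurableSet]
  calc ν' (D ⁻¹' B) ≤ ν (cthickening r (D ⁻¹' B)) + c := h _ (hDm hB)
    _ ≤ ν (D ⁻¹' cthickening (K * r) B) + c := by
      gcongr
      exact ((hD.mapsTo_cthickening r _).mono_right
        (cthickening_subset_of_subset _ (image_preimage_subset D B))).subset_preimage

theorem ProhorovDominated.of_map {Z₀ : Type*} [PseudoEMetricSpace Z₀] [MeasurableSpace Z₀]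
    {ι : Z₀ → Z} (hι : Isometry ι) (hιm : MeasurableEmbedding ι) {κ κ' : Measure Z₀}
    (h : ProhorovDominated r c (κ.map ι) (κ'.map ι)) : ProhorovDominated r c κ κ' := by
  intro B hB
  have hsub : ι ⁻¹' cthickening r (ι '' B) ⊆ cthickening r B := fun x hx => by
    rwa [mem_preimage, mem_cthickening_iff, infEDist_image hι, ← mem_cthickening_iff] at hx
  calc κ' B = κ'.map ι (ι '' B) := by rw [hιm.map_apply, hιm.injective.preimage_image]
    _ ≤ κ.map ι (cthickening r (ι '' B)) + c := h _ (hιm.measurableSet_image.mpr hB)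
    _ ≤ κ (cthickening r B) + c := by rw [hιm.map_apply]; gcongr

end ProhorovDominated

theorem ProhorovDominated.prod {Z W : Type*} [PseudoEMetricSpace Z] [MeasurableSpace Z]
    [BorelSpace Z] [PseudoEMetricSpace W] [MeasurableSpace W] [BorelSpace W]
    [SecondCountableTopology W] {r r' : ℝ} {c c' : ℝ≥0∞} {ρ ρ' : Measure Z}
    [IsProbabilityMeasure ρ] [SFinite ρ']
    {π π' : Measure W} [SFinite π] [IsProbabilityMeasure π'] (hr : 0 ≤ r) (hr' : 0 ≤ r')
    (hρ : ProhorovDominated r c ρ ρ') (hπ : ProhorovDominated r' c' π π') :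
    ProhorovDominated (r + r') (c + c') (ρ.prod π) (ρ'.prod π') := by
  intro B hB
  have hC : MeasurableSet (cthickening r B) := isClosed_cthickening.measurableSet
  set g : Z → ℝ := fun x => (π' (Prod.mk x ⁻¹' B)).toReal
  set h : Z → ℝ := fun x => (π' (Prod.mk x ⁻¹' cthickening r B)).toReal
  have hgm : Measurable g := (measurable_measure_prodMk_left hB).ennreal_toReal
  have hlevel : ∀ t ∈ Ioo (0 : ℝ) 1, ρ' {x | t < g x} ≤ ρ {x | t ≤ h x} + c := fun t _ =>
    (hρ _ (measurableSet_lt measurable_const hgm)).trans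
      (by gcongr; exact fun x hx => le_measure_preimage_prodMk_cthickening hr hx)
  have hsection : ∀ x, cthickening r' (Prod.mk x ⁻¹' cthickening r B) ⊆
      Prod.mk x ⁻¹' cthickening (r + r') B := fun x =>
    calc cthickening r' (Prod.mk x ⁻¹' cthickening r B)
        ⊆ Prod.mk x ⁻¹' cthickening r' (cthickening r B) := by
          simpa using (((LipschitzWith.prodMk_left x).mapsTo_cthickening r' _).mono_right
            (cthickening_subset_of_subset _ (image_preimage_subset _ _))).subset_preimage
      _ ⊆ Prod.mk x ⁻¹' cthickening (r + r') B := by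
          rw [add_comm]; exact preimage_mono (cthickening_cthickening_subset hr' hr B)
  calc (ρ'.prod π') B = ∫⁻ x, ENNReal.ofReal (g x) ∂ρ' := by
        simp only [Measure.prod_apply hB, g, ENNReal.ofReal_toReal (measure_ne_top _ _)]
    _ ≤ ∫⁻ x, ENNReal.ofReal (h x) ∂ρ + c :=
        lintegral_ofReal_le_add_of_meas_lt_le hgm.aemeasurable
          (measurable_measure_prodMk_left hC).ennreal_toReal.aemeasurable
          (fun _ => ENNReal.toReal_nonneg) (fun _ => ENNReal.toReal_le_of_le_ofReal zero_le_one
            (by simpa using prob_le_one)) (fun _ => ENNReal.toReal_nonneg) hlevel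
    _ ≤ ∫⁻ x, (π (Prod.mk x ⁻¹' cthickening (r + r') B) + c') ∂ρ + c := by
        gcongr with x
        simp only [h, ENNReal.ofReal_toReal (measure_ne_top _ _)]
        exact (hπ _ (measurable_prodMk_left hC)).trans (by gcongr; exact hsection x)
    _ = (ρ.prod π) (cthickening (r + r') B) + (c + c') := by
        rw [lintegral_add_right _ measurable_const, lintegral_const, measure_univ, mul_one,
          Measure.prod_apply isClosed_cthickening.measurableSet, add_comm c c', add_assoc]

theorem Fin.isometry_insertNth {n : ℕ} {Z : Fin (n + 1) → Type*}
    [∀ i, PseudoMetricSpace (Z i)] (i : Fin (n + 1)) :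
    Isometry fun p : Z i × ((j : Fin n) → Z (i.succAbove j)) => i.insertNth p.1 p.2 :=
  Isometry.of_dist_eq fun p q => by rw [Fin.dist_insertNth_insertNth, Prod.dist_eq]

theorem ProhorovDominated.pi {ℓ : ℕ} {Z : Fin ℓ → Type*} [∀ i, PseudoMetricSpace (Z i)]
    [∀ i, MeasurableSpace (Z i)] [∀ i, BorelSpace (Z i)] [∀ i, SecondCountableTopology (Z i)]
    {κ κ' : ∀ i, Measure (Z i)} [∀ i, IsProbabilityMeasure (κ i)]
    [∀ i, IsProbabilityMeasure (κ' i)] {r : ℝ} {c : ℝ≥0∞} (hr : 0 ≤ r)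
    (h : ∀ i, ProhorovDominated r c (κ i) (κ' i)) :
    ProhorovDominated (ℓ * r) (ℓ * c) (Measure.pi κ) (Measure.pi κ') := by
  induction ℓ with
  | zero =>
    intro B _
    rw [Measure.pi_of_empty κ, Measure.pi_of_empty κ']
    exact le_add_right (measure_mono (self_subset_cthickening B))
  | succ ℓ ih =>
    let e := MeasurableEquiv.piFinSuccAbove Z 0
    have hsplit := ((h 0).prod hr (by positivity) (ih fun j => h (Fin.succAbove 0 j))).map
      (D := e.symm) (Fin.isometry_insertNth 0).lipschitz e.symm.measurable
    rw [((measurePreserving_piFinSuccAbove κ 0).symm e).map_eq,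
      ((measurePreserving_piFinSuccAbove κ' 0).symm e).map_eq] at hsplit
    convert hsplit using 1 <;> push_cast <;> ring

section distMatrix

variable {ι X : Type*} [PseudoMetricSpace X]

def distMatrix (f : ι → X) : ι → ι → ℝ := fun i j => dist (f i) (f j)

theorem Isometry.distMatrix_comp {Y : Type*} [PseudoMetricSpace Y] {φ : X → Y}
    (hφ : Isometry φ) (f : ι → X) : distMatrix (φ ∘ f) = distMatrix f := by
  ext i j
  exact hφ.dist_eq (f i) (f j)

variable [Fintype ι]

theorem lipschitzWith_distMatrix : LipschitzWith 2 (distMatrix : (ι → X) → ι → ι → ℝ) := by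
  refine LipschitzWith.of_dist_le_mul fun f g => ?_
  refine (dist_pi_le_iff (by positivity)).mpr fun i => (dist_pi_le_iff (by positivity)).mpr
    fun j => ?_
  calc dist (dist (f i) (f j)) (dist (g i) (g j)) ≤ dist (f i) (g i) + dist (f j) (g j) :=
        dist_dist_dist_le _ _ _ _
    _ ≤ 2 * dist f g := by linarith [dist_le_pi_dist f g i, dist_le_pi_dist f g j]

theorem continuous_distMatrix : Continuous (distMatrix : (ι → X) → ι → ι → ℝ) :=
  lipschitzWith_distMatrix.continuous

end distMatrix

instance (A : MMS) (ℓ : ℕ) : IsProbabilityMeasure (tau A ℓ) :=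
  Measure.isProbabilityMeasure_map continuous_distMatrix.measurable.aemeasurable

theorem tau_eq_map_distMatrix_pi_map (A : MMS) (ℓ : ℕ) {Z : Type*} [PseudoMetricSpace Z]
    [MeasurableSpace Z] [BorelSpace Z] [SecondCountableTopology Z] {φ : A.carrier → Z}
    (hφ : Isometry φ) : tau A ℓ = (Measure.pi fun _ : Fin ℓ => A.μ.map φ).map distMatrix := by
  have hmp : MeasurePreserving (fun f : Fin ℓ → A.carrier => φ ∘ f)
      (Measure.pi fun _ => A.μ) (Measure.pi fun _ => A.μ.map φ) :=
    measurePreserving_pi _ _ fun _ => ⟨hφ.continuous.measurable, rfl⟩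
  rw [tau, ← hmp.map_eq, Measure.map_map continuous_distMatrix.measurable hmp.measurable]
  congr 1
  funext f
  exact (hφ.distMatrix_comp f).symm

theorem ProhorovDominated.tau {A B : MMS} (ℓ : ℕ) {ε : ℝ} (hε : 0 ≤ ε) {Z : Type*}
    [PseudoMetricSpace Z] [MeasurableSpace Z] [BorelSpace Z] {φ : A.carrier → Z}
    {ψ : B.carrier → Z} (hφ : Isometry φ) (hψ : Isometry ψ)
    (h : ProhorovDominated ε (ENNReal.ofReal ε) (A.μ.map φ) (B.μ.map ψ)) :
    ProhorovDominated (2 * ℓ * ε) (ℓ * ENNReal.ofReal ε) (tau A ℓ) (tau B ℓ) := by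
  -- Product σ-algebras are Borel only over second-countable spaces, so pass to the separable
  -- closure of the two images.
  set Z₀ : Set Z := closure (range φ ∪ range ψ)
  have : SecondCountableTopology Z₀ := by
    have := ((TopologicalSpace.isSeparable_range hφ.continuous).union
      (TopologicalSpace.isSeparable_range hψ.continuous)).closure.separableSpace
    exact UniformSpace.secondCountable_of_separable Z₀
  let φ₀ : A.carrier → Z₀ := codRestrict φ Z₀ fun a => subset_closure (.inl (mem_range_self a))
  let ψ₀ : B.carrier → Z₀ := codRestrict ψ Z₀ fun b => subset_closure (.inr (mem_range_self b))
  have hφ₀ : Isometry φ₀ := fun x y => hφ x y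
  have hψ₀ : Isometry ψ₀ := fun x y => hψ x y
  have : IsProbabilityMeasure (A.μ.map φ₀) :=
    Measure.isProbabilityMeasure_map hφ₀.continuous.measurable.aemeasurable
  have : IsProbabilityMeasure (B.μ.map ψ₀) :=
    Measure.isProbabilityMeasure_map hψ₀.continuous.measurable.aemeasurable
  have hemb : MeasurableEmbedding ((↑) : Z₀ → Z) :=
    MeasurableEmbedding.subtype_coe isClosed_closure.measurableSet
  have h₀ : ProhorovDominated ε (ENNReal.ofReal ε) (A.μ.map φ₀) (B.μ.map ψ₀) := by
    refine ProhorovDominated.of_map isometry_subtype_coe hemb ?_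
    rwa [Measure.map_map hemb.measurable hφ₀.continuous.measurable,
      Measure.map_map hemb.measurable hψ₀.continuous.measurable]
  rw [tau_eq_map_distMatrix_pi_map A ℓ hφ₀, tau_eq_map_distMatrix_pi_map B ℓ hψ₀]
  simpa [mul_assoc] using (ProhorovDominated.pi hε fun _ => h₀).map lipschitzWith_distMatrix
    continuous_distMatrix.measurable

theorem levyProkhorovDist_le_of_prohorovDominated {Ω : Type*} [PseudoMetricSpace Ω]
    [MeasurableSpace Ω] [OpensMeasurableSpace Ω] {μ ν : Measure Ω} [IsProbabilityMeasure μ]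
    [IsProbabilityMeasure ν] {r : ℝ} {c : ℝ≥0∞} (hr : 0 ≤ r) (hc : c ≤ ENNReal.ofReal r)
    (h : ProhorovDominated r c ν μ) : levyProkhorovDist μ ν ≤ r :=
  levyProkhorovDist_le_of_forall_le μ ν hr fun _ B hε hB => (h B hB).trans <|
    add_le_add (measure_mono (cthickening_subset_thickening' (hr.trans_lt hε) hε B))
      (hc.trans (ENNReal.ofReal_le_ofReal hε.le))

theorem tendsto_of_tendsto_levyProkhorovDist {Ω ι : Type*} [PseudoMetricSpace Ω]
    [MeasurableSpace Ω] [OpensMeasurableSpace Ω] {l : Filter ι} {P : ι → ProbabilityMeasure Ω}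
    {Q : ProbabilityMeasure Ω}
    (h : Tendsto (fun i => levyProkhorovDist (P i : Measure Ω) Q) l (𝓝 0)) :
    Tendsto P l (𝓝 Q) :=
  (LevyProkhorov.continuous_toMeasure_probabilityMeasure.tendsto (LevyProkhorov.ofMeasure Q)).comp
    (tendsto_iff_dist_tendsto_zero.mpr h : Tendsto (fun i => LevyProkhorov.ofMeasure (P i)) l _)

def gpSet (A B : MMS) : Set ℝ :=
  {ε : ℝ | 0 < ε ∧ ∃ (Z : Type) (_ : MetricSpace Z)
    (_ : MeasurableSpace Z) (_ : BorelSpace Z)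
    (φ : A.carrier → Z) (φ' : B.carrier → Z),
    Isometry φ ∧ Isometry φ' ∧ prohorovLE ε (A.μ.map φ) (B.μ.map φ')}

theorem one_mem_gpSet (A B : MMS) : (1 : ℝ) ∈ gpSet A B := by
  let : MeasurableSpace (A.carrier ⊕ B.carrier) := borel _
  have : BorelSpace (A.carrier ⊕ B.carrier) := ⟨rfl⟩
  have : IsProbabilityMeasure (A.μ.map (Sum.inl : _ → A.carrier ⊕ B.carrier)) :=
    Measure.isProbabilityMeasure_map (by fun_prop)
  have : IsProbabilityMeasure (B.μ.map (Sum.inr : _ → A.carrier ⊕ B.carrier)) :=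
    Measure.isProbabilityMeasure_map (by fun_prop)
  refine ⟨one_pos, _, Metric.metricSpaceSum, inferInstance, inferInstance, Sum.inl, Sum.inr,
    Metric.isometry_inl, Metric.isometry_inr, fun S _ => ⟨?_, ?_⟩⟩ <;>
  exact prob_le_one.trans (by simp)

theorem levyProkhorovDist_tau_le (A B : MMS) (ℓ : ℕ) :
    levyProkhorovDist (tau A ℓ) (tau B ℓ) ≤ 2 * ℓ * gpDist A B := by
  have hbound : ∀ ε ∈ gpSet A B, levyProkhorovDist (tau A ℓ) (tau B ℓ) ≤ 2 * ℓ * ε := by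
    rintro ε ⟨hε, Z, _, _, _, φ, φ', hφ, hφ', h⟩
    refine levyProkhorovDist_le_of_prohorovDominated (by positivity) ?_
      (ProhorovDominated.tau ℓ hε.le hφ' hφ fun S hS => (h S hS).2)
    rw [← ENNReal.ofReal_natCast, ← ENNReal.ofReal_mul (by positivity)]
    exact ENNReal.ofReal_le_ofReal (by nlinarith [(Nat.cast_nonneg ℓ : (0 : ℝ) ≤ ℓ)])
  change _ ≤ 2 * ℓ * sInf (gpSet A B)
  rw [← smul_eq_mul, ← Real.sInf_smul_of_nonneg (by positivity)]
  exact le_csInf (Set.Nonempty.smul_set ⟨1, one_mem_gpSet A B⟩)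
    (by rintro _ ⟨ε, hε, rfl⟩; exact hbound ε hε)

/-- If `d_GP(X_n, X) → 0`, then for every `ℓ ≥ 1` the distance matrix
distributions converge weakly. -/
theorem stmt14 (Xs : ℕ → MMS) (Y : MMS)
    (h : Filter.Tendsto (fun n => gpDist (Xs n) Y) Filter.atTop (nhds 0)) :
    ∀ ℓ : ℕ, 1 ≤ ℓ →
      ∀ F : BoundedContinuousFunction (Fin ℓ → Fin ℓ → ℝ) ℝ,
        Filter.Tendsto (fun n => ∫ v, F v ∂(tau (Xs n) ℓ)) Filter.atTop
          (nhds (∫ v, F v ∂(tau Y ℓ))) := by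
  intro ℓ _ F
  have hLP : Tendsto (fun n => levyProkhorovDist (tau (Xs n) ℓ) (tau Y ℓ)) atTop (𝓝 0) :=
    squeeze_zero (fun _ => ENNReal.toReal_nonneg) (fun n => levyProkhorovDist_tau_le _ _ ℓ)
      (by simpa using h.const_mul (2 * ℓ : ℝ))
  exact ProbabilityMeasure.tendsto_iff_forall_integral_tendsto.mp
    (tendsto_of_tendsto_levyProkhorovDist (P := fun n => ⟨tau (Xs n) ℓ, inferInstance⟩)
      (Q := ⟨tau Y ℓ, inferInstance⟩) hLP) F
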